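/- (Noether symmetries generate Hamiltonian directions for the Poincaré–Cartan 2-form.) Let E be a real normed vector space, L : E × E → ℝ twice Fréchet differentiable, and let (X, f) be a Noether symmetry of L with X : E → E and f : E → ℝ Fréchet differentiable. Define F : E × E → ℝ by F(x,y) = −D₁L(x,y)(X(x)) − f(x), and the complete-lift vector field Z(x,y) := (X(x), X(y)) on E×E. Then the contraction of ω_L with Z equals the differential of F: for all (x,y) ∈ E×E and all (u,v) ∈ E×E, ω_L(x,y)((X(x), X(y)), (u,v)) = DF(x,y)(u,v). -/

import Mathlib

variable {E : Type*} [NormedAddCommGroup E] [NormedSpace ℝ E]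

/-- The Fréchet derivative of `z ↦ L (z, y)` at `x`. -/
noncomputable def D1 (L : E × E → ℝ) (x y : E) : E →L[ℝ] ℝ :=
  fderiv ℝ (fun z => L (z, y)) x

/-- The Fréchet derivative of `z ↦ L (x, z)` at `y`. -/
noncomputable def D2 (L : E × E → ℝ) (x y : E) : E →L[ℝ] ℝ :=
  fderiv ℝ (fun z => L (x, z)) y

/-- The mixed second Fréchet derivative `M(x,y)(u,v) = D²L(x,y)((u,0),(0,v))`. -/
noncomputable def Mform (L : E × E → ℝ) (p : E × E) (u v : E) : ℝ :=
  fderiv ℝ (fderiv ℝ L) p (u, 0) (0, v)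

/-- The discrete Poincaré–Cartan 2-form
`ω_L(x,y)((u₁,v₁),(u₂,v₂)) = M(x,y)(u₂,v₁) − M(x,y)(u₁,v₂)`. -/
noncomputable def omegaL (L : E × E → ℝ) (p : E × E) (w1 w2 : E × E) : ℝ :=
  Mform L p w2.1 w1.2 - Mform L p w1.1 w2.2

/-- The Noether function `F(x,y) = −D₁L(x,y)(X(x)) − f(x)` associated to a Noether
symmetry `(X, f)` of `L`. -/
noncomputable def noetherFn (L : E × E → ℝ) (X : E → E) (f : E → ℝ) (p : E × E) : ℝ :=
  -(D1 L p.1 p.2 (X p.1)) - f p.1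

lemma D1_eq (L : E × E → ℝ) (hL : Differentiable ℝ L) (x y u : E) :
    D1 L x y u = fderiv ℝ L (x, y) (u, 0) := by
  have h : HasFDerivAt (fun z : E => L (z, y))
      ((fderiv ℝ L (x, y)).comp ((ContinuousLinearMap.id ℝ E).prod 0)) x :=
    (hL (x, y)).hasFDerivAt.comp x ((hasFDerivAt_id x).prodMk (hasFDerivAt_const y x))
  rw [D1, h.fderiv]; rfl

lemma D2_eq (L : E × E → ℝ) (hL : Differentiable ℝ L) (x y v : E) :
    D2 L x y v = fderiv ℝ L (x, y) (0, v) := by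
  have h : HasFDerivAt (fun z : E => L (x, z))
      ((fderiv ℝ L (x, y)).comp ((0 : E →L[ℝ] E).prod (ContinuousLinearMap.id ℝ E))) y :=
    (hL (x, y)).hasFDerivAt.comp y ((hasFDerivAt_const x y).prodMk (hasFDerivAt_id y))
  rw [D2, h.fderiv]; rfl

/-- A Noether symmetry generates a Hamiltonian direction for the Poincaré–Cartan 2-form:
the contraction of `ω_L` with the complete lift `(X(x), X(y))` equals the differential
of the Noether function `F`. -/
theorem noether_symmetry_hamiltonian_section
    (L : E × E → ℝ) (hL : Differentiable ℝ L) (hL2 : Differentiable ℝ (fderiv ℝ L))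
    (X : E → E) (f : E → ℝ) (hX : Differentiable ℝ X) (hf : Differentiable ℝ f)
    (hNoe : ∀ x y : E, D1 L x y (X x) + D2 L x y (X y) = f y - f x) :
    ∀ x y u v : E,
      omegaL L (x, y) (X x, X y) (u, v) = fderiv ℝ (noetherFn L X f) (x, y) (u, v) := by
  intro x y u v
  set φ := fderiv ℝ L with hφdef
  have hφ : ∀ p, HasFDerivAt L (φ p) p := fun p => (hL p).hasFDerivAt
  have hB : HasFDerivAt φ (fderiv ℝ φ (x, y)) (x, y) := (hL2 (x, y)).hasFDerivAt
  set B := fderiv ℝ φ (x, y) with hBdef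
  have hsymm : ∀ a b : E × E, B a b = B b a := fun a b =>
    second_derivative_symmetric hφ hB a b
  -- Noether identity in φ form
  have hN : ∀ p : E × E, φ p (X p.1, 0) = f p.2 - f p.1 - φ p (0, X p.2) := by
    intro p
    have h := hNoe p.1 p.2
    rw [D1_eq L hL, D2_eq L hL] at h
    linarith
  -- rep1 : noetherFn as a function of the first slot
  have hrep1 : noetherFn L X f = fun p : E × E => -(φ p (X p.1, 0)) - f p.1 := by
    funext p
    rw [noetherFn, D1_eq L hL]
  have hrep2 : noetherFn L X f = fun p : E × E => φ p (0, X p.2) - f p.2 := by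
    funext p
    rw [noetherFn, D1_eq L hL, hN p]
    ring
  -- derivative of p ↦ (X p.1, 0)
  have hc1 : HasFDerivAt (fun p : E × E => (X p.1, (0 : E)))
      (((fderiv ℝ X x).comp (ContinuousLinearMap.fst ℝ E E)).prod 0) (x, y) :=
    (((hX x).hasFDerivAt.comp (x, y) hasFDerivAt_fst)).prodMk (hasFDerivAt_const _ _)
  have hc2 : HasFDerivAt (fun p : E × E => ((0 : E), X p.2))
      ((0 : E × E →L[ℝ] E).prod ((fderiv ℝ X y).comp (ContinuousLinearMap.snd ℝ E E))) (x, y) :=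
    (hasFDerivAt_const _ _).prodMk (((hX y).hasFDerivAt.comp (x, y) hasFDerivAt_snd))
  have hg1 : HasFDerivAt (fun p : E × E => -(φ p (X p.1, 0)) - f p.1)
      (-((φ (x, y)).comp (((fderiv ℝ X x).comp (ContinuousLinearMap.fst ℝ E E)).prod 0)
          + B.flip (X x, 0))
        - (fderiv ℝ f x).comp (ContinuousLinearMap.fst ℝ E E)) (x, y) :=
    ((hB.clm_apply hc1).neg).sub ((hf x).hasFDerivAt.comp (x, y) hasFDerivAt_fst)
  have hg2 : HasFDerivAt (fun p : E × E => φ p (0, X p.2) - f p.2)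
      (((φ (x, y)).comp ((0 : E × E →L[ℝ] E).prod
            ((fderiv ℝ X y).comp (ContinuousLinearMap.snd ℝ E E)))
          + B.flip (0, X y))
        - (fderiv ℝ f y).comp (ContinuousLinearMap.snd ℝ E E)) (x, y) :=
    (hB.clm_apply hc2).sub ((hf y).hasFDerivAt.comp (x, y) hasFDerivAt_snd)
  have hd1 := hg1.fderiv
  have hd2 := hg2.fderiv
  rw [← hrep1] at hd1
  rw [← hrep2] at hd2
  have hsplit : fderiv ℝ (noetherFn L X f) (x, y) (u, v)
      = fderiv ℝ (noetherFn L X f) (x, y) (u, 0) + fderiv ℝ (noetherFn L X f) (x, y) (0, v) := by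
    rw [← ContinuousLinearMap.map_add]
    norm_num
  rw [hsplit]
  nth_rewrite 1 [hd2]
  nth_rewrite 1 [hd1]
  simp only [omegaL, Mform, ← hφdef, ← hBdef]
  simp [hsymm (0, v) (X x, 0)]
  ring
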